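/- arXiv:2504.13513 — 5 statements merged into one kernel-verified Lean document; each statement's English description precedes it below -/
import Mathlib

section
/- Let f : (0,∞) → ℝ be convex and C² with f' nondecreasing, and let ℓ : (0,∞) → ℝ satisfy ℓ'(s) = √s · f''(s). Then for all a, b > 0, max(a,b) · (f'(b) − f'(a))² ≥ (ℓ(b) − ℓ(a))². -/
/-- For convex `C²` `f` on `(0,∞)` with nondecreasing derivative `f'`,
and `ℓ` with `ℓ'(s) = √s · f''(s)`, one has
`max(a,b) · (f'(b) − f'(a))² ≥ (ℓ(b) − ℓ(a))²` for all `a, b > 0`. -/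
theorem stmt_2 (f f' f'' ℓ : ℝ → ℝ)
    (hconv : ConvexOn ℝ (Set.Ioi (0 : ℝ)) f)
    (hf' : ∀ s ∈ Set.Ioi (0 : ℝ), HasDerivAt f (f' s) s)
    (hf'' : ∀ s ∈ Set.Ioi (0 : ℝ), HasDerivAt f' (f'' s) s)
    (hf''cont : ContinuousOn f'' (Set.Ioi (0 : ℝ)))
    (hmono : MonotoneOn f' (Set.Ioi (0 : ℝ)))
    (hℓ : ∀ s ∈ Set.Ioi (0 : ℝ), HasDerivAt ℓ (Real.sqrt s * f'' s) s) :
    ∀ a b : ℝ, 0 < a → 0 < b →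
      (ℓ b - ℓ a) ^ 2 ≤ max a b * (f' b - f' a) ^ 2 := by
  -- f'' is nonnegative on (0, ∞)
  have hnn : ∀ s ∈ Set.Ioi (0 : ℝ), 0 ≤ f'' s := by
    intro s hs
    have h := hasDerivAt_iff_tendsto_slope.mp (hf'' s hs)
    have h' : Filter.Tendsto (slope f' s) (nhdsWithin s (Set.Ioi s)) (nhds (f'' s)) :=
      h.mono_left (nhdsWithin_mono _ (fun x hx => ne_of_gt hx))
    refine ge_of_tendsto h' ?_
    filter_upwards [self_mem_nhdsWithin] with t ht
    have hs0 : (0:ℝ) < s := hs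
    have ht0 : s < t := ht
    have : f' s ≤ f' t := hmono hs (lt_trans hs0 ht0) (le_of_lt ht0)
    simp only [slope_def_field]
    exact div_nonneg (by linarith) (by linarith)
  -- key one-sided estimate
  have key : ∀ a b : ℝ, 0 < a → 0 < b → a ≤ b →
      (ℓ b - ℓ a) ^ 2 ≤ b * (f' b - f' a) ^ 2 := by
    intro a b ha hb hab
    have hsub : Set.uIcc a b ⊆ Set.Ioi (0 : ℝ) := by
      rw [Set.uIcc_of_le hab]
      intro x hx; exact lt_of_lt_of_le ha hx.1
    have hint1 : IntervalIntegrable f'' MeasureTheory.volume a b :=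
      (hf''cont.mono hsub).intervalIntegrable
    have hint2 : IntervalIntegrable (fun s => Real.sqrt s * f'' s) MeasureTheory.volume a b :=
      ((Real.continuous_sqrt.continuousOn.mul hf''cont).mono hsub).intervalIntegrable
    have hFTC1 : ∫ s in a..b, f'' s = f' b - f' a :=
      intervalIntegral.integral_eq_sub_of_hasDerivAt (fun x hx => hf'' x (hsub hx)) hint1
    have hFTC2 : ∫ s in a..b, Real.sqrt s * f'' s = ℓ b - ℓ a :=
      intervalIntegral.integral_eq_sub_of_hasDerivAt (fun x hx => hℓ x (hsub hx)) hint2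
    have hnonneg : 0 ≤ ℓ b - ℓ a := by
      rw [← hFTC2]
      apply intervalIntegral.integral_nonneg hab
      intro u hu
      exact mul_nonneg (Real.sqrt_nonneg u)
        (hnn u (hsub (Set.mem_uIcc.mpr (Or.inl hu))))
    have hle : ℓ b - ℓ a ≤ Real.sqrt b * (f' b - f' a) := by
      rw [← hFTC2, ← hFTC1, ← intervalIntegral.integral_const_mul]
      apply intervalIntegral.integral_mono_on hab hint2 (hint1.const_mul _)
      intro u hu
      have hu' : u ∈ Set.Ioi (0:ℝ) := hsub (Set.mem_uIcc.mpr (Or.inl hu))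
      exact mul_le_mul_of_nonneg_right (Real.sqrt_le_sqrt hu.2) (hnn u hu')
    calc (ℓ b - ℓ a) ^ 2 ≤ (Real.sqrt b * (f' b - f' a)) ^ 2 :=
          pow_le_pow_left₀ hnonneg hle 2
      _ = b * (f' b - f' a) ^ 2 := by
          rw [mul_pow, Real.sq_sqrt hb.le]
  intro a b ha hb
  rcases le_total a b with hab | hab
  · calc (ℓ b - ℓ a) ^ 2 ≤ b * (f' b - f' a) ^ 2 := key a b ha hb hab
      _ ≤ max a b * (f' b - f' a) ^ 2 :=
        mul_le_mul_of_nonneg_right (le_max_right a b) (sq_nonneg _)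
  · have h := key b a hb ha hab
    have e1 : (ℓ b - ℓ a) ^ 2 = (ℓ a - ℓ b) ^ 2 := by ring
    have e2 : (f' b - f' a) ^ 2 = (f' a - f' b) ^ 2 := by ring
    calc (ℓ b - ℓ a) ^ 2 = (ℓ a - ℓ b) ^ 2 := e1
      _ ≤ a * (f' a - f' b) ^ 2 := h
      _ = a * (f' b - f' a) ^ 2 := by rw [e2]
      _ ≤ max a b * (f' b - f' a) ^ 2 :=
        mul_le_mul_of_nonneg_right (le_max_left a b) (sq_nonneg _)
end

section
/- Let V : ℝ^d → ℝ be Lipschitz with constant L, let τ > 0, h > 0, and x₀ ∈ hℤ^d. If x₁ ∈ hℤ^d minimizes x ↦ V(x) + |x − x₀|²/(2τ) over hℤ^d and x₁ ≠ x₀, then h ≤ 2 L τ. -/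
/-! Comparing the minimizer with the competitor `x₀` gives
`‖x₁ - x₀‖² / (2τ) ≤ V x₀ - V x₁ ≤ L ‖x₁ - x₀‖`, so the displacement is at most `2 L τ`;
on the other hand two distinct points of `hℤ^d` differ by at least `h` in some coordinate. -/

open scoped NNReal

theorem le_abs_mul_intCast_sub_mul_intCast {h : ℝ} (hh : 0 ≤ h) {k l : ℤ} (hkl : k ≠ l) :
    h ≤ |h * k - h * l| := by
  have hone : (1 : ℝ) ≤ |(k : ℝ) - l| := by exact_mod_cast Int.one_le_abs (sub_ne_zero.mpr hkl)
  rw [← mul_sub, abs_mul, abs_of_nonneg hh]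
  exact le_mul_of_one_le_right hh hone

theorem le_dist_of_mem_grid {ι : Type*} [Fintype ι] {h : ℝ} (hh : 0 ≤ h)
    {x y : EuclideanSpace ℝ ι} (hx : ∀ i, ∃ k : ℤ, x i = h * k) (hy : ∀ i, ∃ k : ℤ, y i = h * k)
    (hne : x ≠ y) : h ≤ dist x y := by
  obtain ⟨i, hi⟩ : ∃ i, x i ≠ y i := by
    by_contra! hall
    exact hne (PiLp.ext hall)
  obtain ⟨k, hk⟩ := hx i
  obtain ⟨l, hl⟩ := hy i
  have hkl : k ≠ l := by rintro rfl; exact hi (hk.trans hl.symm)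
  calc h ≤ |h * k - h * l| := le_abs_mul_intCast_sub_mul_intCast hh hkl
    _ = dist (x i) (y i) := by rw [Real.dist_eq, hk, hl]
    _ ≤ dist x y := PiLp.dist_apply_le x y i

theorem LipschitzWith.norm_sub_le_of_proximal_le {E : Type*} [SeminormedAddCommGroup E]
    {V : E → ℝ} {L : ℝ≥0} (hV : LipschitzWith L V) {τ : ℝ} (hτ : 0 < τ) {x₀ x₁ : E}
    (hle : V x₁ + ‖x₁ - x₀‖ ^ 2 / (2 * τ) ≤ V x₀) : ‖x₁ - x₀‖ ≤ 2 * L * τ := by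
  have hlip : V x₀ ≤ V x₁ + L * ‖x₁ - x₀‖ := by
    rw [← dist_eq_norm, dist_comm]
    exact hV.le_add_mul x₀ x₁
  set N := ‖x₁ - x₀‖
  have hsq : N ^ 2 ≤ 2 * L * τ * N := by
    have : N ^ 2 / (2 * τ) ≤ L * N := by linarith
    rw [div_le_iff₀ (by positivity)] at this
    linarith
  have hc : 0 ≤ 2 * L * τ := by positivity
  nlinarith [norm_nonneg (x₁ - x₀)]

/-- if a grid point `x₁ ≠ x₀` minimizes `V(x) + |x−x₀|²/(2τ)` over the grid
`hℤ^d` and `V` is `L`-Lipschitz, then `h ≤ 2 L τ`. -/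
theorem stmt_3 (d : ℕ) (V : EuclideanSpace ℝ (Fin d) → ℝ) (L : NNReal)
    (hV : LipschitzWith L V) (τ h : ℝ) (hτ : 0 < τ) (hh : 0 < h)
    (x₀ x₁ : EuclideanSpace ℝ (Fin d))
    (hx₀ : ∀ i, ∃ k : ℤ, x₀ i = h * k)
    (hx₁ : ∀ i, ∃ k : ℤ, x₁ i = h * k)
    (hmin : ∀ y : EuclideanSpace ℝ (Fin d), (∀ i, ∃ k : ℤ, y i = h * k) →
      V x₁ + ‖x₁ - x₀‖ ^ 2 / (2 * τ) ≤ V y + ‖y - x₀‖ ^ 2 / (2 * τ))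
    (hne : x₁ ≠ x₀) :
    h ≤ 2 * (L : ℝ) * τ := by
  have hstay : V x₁ + ‖x₁ - x₀‖ ^ 2 / (2 * τ) ≤ V x₀ := by simpa using hmin x₀ hx₀
  calc h ≤ dist x₁ x₀ := le_dist_of_mem_grid hh.le hx₁ hx₀ hne
    _ = ‖x₁ - x₀‖ := dist_eq_norm x₁ x₀
    _ ≤ 2 * L * τ := hV.norm_sub_le_of_proximal_le hτ hstay
end

section
/- Let V : ℝ^d → ℝ be differentiable with ∇V Lipschitz with constant K, τ ≤ 1/(2K), and h > 0. Let x₀ ∈ ℝ^d, let x₁ be the unconstrained minimizer of x ↦ V(x) + |x − x₀|²/(2τ) over ℝ^d, and let x₁^h be a minimizer of the same functional over the grid hℤ^d. Then |x₁^h − x₁| ≤ (1 + 4Kτ)·h. -/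
/-! At the minimizer `x₁` the first-order condition `∇V x₁ + (x₁ - x₀) / τ = 0` removes the
linear term of the proximal functional `F y = V y + ‖y - x₀‖² / (2τ)`, so by the descent lemma
`F y - F x₁` lies within `K/2 ‖y - x₁‖²` of `‖y - x₁‖² / (2τ)`. Since `F x₁ʰ ≤ F z` for a grid
point `z` within `h` of `x₁`, this gives `(1 - Kτ) ‖x₁ʰ - x₁‖² ≤ (1 + Kτ) h²`, and `Kτ ≤ 1/2`
turns it into the bound. -/

open scoped InnerProductSpace

noncomputable def proximalObjective {E : Type*} [NormedAddCommGroup E] (f : E → ℝ) (τ : ℝ)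
    (x₀ y : E) : ℝ :=
  f y + ‖y - x₀‖ ^ 2 / (2 * τ)

theorem le_one_add_four_mul_of_one_sub_mul_sq_le {a b r : ℝ} (ha : 0 ≤ a) (ha' : a ≤ 1 / 2)
    (hb : 0 ≤ b) (hr : (1 - a) * r ^ 2 ≤ (1 + a) * b ^ 2) : r ≤ (1 + 4 * a) * b := by
  have key : (1 + a) * b ^ 2 ≤ (1 - a) * ((1 + 4 * a) * b) ^ 2 := by
    have hpos : 0 ≤ 3 + 4 * a - 8 * a ^ 2 := by nlinarith
    nlinarith [mul_nonneg (mul_nonneg ha hpos) (sq_nonneg b)]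
  have hsq : r ^ 2 ≤ ((1 + 4 * a) * b) ^ 2 := le_of_mul_le_mul_left (hr.trans key) (by linarith)
  exact (abs_le_of_sq_le_sq' hsq (by positivity)).2

section

variable {E : Type*} [NormedAddCommGroup E] [InnerProductSpace ℝ E] [CompleteSpace E]

theorem HasGradientAt.hasDerivAt_comp_add_smul {f : E → ℝ} {g x v : E} {t : ℝ}
    (hf : HasGradientAt f g (x + t • v)) :
    HasDerivAt (fun s : ℝ => f (x + s • v)) ⟪g, v⟫_ℝ t := by
  have hline : HasDerivAt (fun s : ℝ => x + s • v) v t := by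
    simpa using ((hasDerivAt_id t).smul_const v).const_add x
  simpa [Function.comp_def] using hf.hasFDerivAt.comp_hasDerivAt t hline

theorem abs_sub_sub_inner_le_of_lipschitzWith_gradient {f : E → ℝ} {f' : E → E} {K : NNReal}
    (hf : ∀ x, HasGradientAt f (f' x) x) (hK : LipschitzWith K f') (x y : E) :
    |f y - f x - ⟪f' x, y - x⟫_ℝ| ≤ K / 2 * ‖y - x‖ ^ 2 := by
  set g : ℝ → ℝ := fun t => f (x + t • (y - x)) - f x - t * ⟪f' x, y - x⟫_ℝ
  have hg : ∀ t, HasDerivAt g ⟪f' (x + t • (y - x)) - f' x, y - x⟫_ℝ t := fun t => by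
    rw [inner_sub_left]
    exact (((hf _).hasDerivAt_comp_add_smul).sub_const _).sub (hasDerivAt_mul_const _)
  have hB : ∀ t, HasDerivAt (fun t => K / 2 * ‖y - x‖ ^ 2 * t ^ 2) (K * ‖y - x‖ ^ 2 * t) t :=
    fun t => ((hasDerivAt_pow 2 t).const_mul _).congr_deriv (by ring)
  have bound : ∀ t ∈ Set.Ico (0 : ℝ) 1,
      ‖⟪f' (x + t • (y - x)) - f' x, y - x⟫_ℝ‖ ≤ K * ‖y - x‖ ^ 2 * t := by
    rintro t ⟨ht, -⟩
    calc ‖⟪f' (x + t • (y - x)) - f' x, y - x⟫_ℝ‖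
        ≤ ‖f' (x + t • (y - x)) - f' x‖ * ‖y - x‖ := norm_inner_le_norm _ _
      _ ≤ K * ‖(x + t • (y - x)) - x‖ * ‖y - x‖ := by
          gcongr; exact hK.norm_sub_le _ _
      _ = K * ‖y - x‖ ^ 2 * t := by
          rw [add_sub_cancel_left, norm_smul, Real.norm_of_nonneg ht]; ring
  have hfence := image_norm_le_of_norm_deriv_right_le_deriv_boundary
    (fun t _ => (hg t).continuousAt.continuousWithinAt) (fun t _ => (hg t).hasDerivWithinAt)
    (by simp [g]) hB bound (Set.right_mem_Icc.2 zero_le_one)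
  simpa [g] using hfence

variable {f : E → ℝ} {f' : E → E} {K : NNReal} {τ : ℝ} {x₀ x₁ : E}

theorem inner_add_inner_div_eq_zero_of_isMinOn_proximalObjective (hf : HasGradientAt f (f' x₁) x₁)
    (hmin : IsMinOn (proximalObjective f τ x₀) Set.univ x₁) (v : E) :
    ⟪f' x₁, v⟫_ℝ + ⟪x₁ - x₀, v⟫_ℝ / τ = 0 := by
  have hline : HasDerivAt (fun t : ℝ => x₁ + t • v - x₀) v 0 := by
    simpa using ((hasDerivAt_id (0 : ℝ)).smul_const v).const_add x₁ |>.sub_const x₀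
  have hderiv : HasDerivAt (fun t : ℝ => proximalObjective f τ x₀ (x₁ + t • v))
      (⟪f' x₁, v⟫_ℝ + 2 * ⟪x₁ - x₀, v⟫_ℝ / (2 * τ)) 0 := by
    have hfline := HasGradientAt.hasDerivAt_comp_add_smul (t := 0) (v := v) (by simpa using hf)
    exact hfline.add (by simpa using hline.norm_sq.div_const (2 * τ))
  have hlocal : IsLocalMin (fun t : ℝ => proximalObjective f τ x₀ (x₁ + t • v)) 0 :=
    Filter.Eventually.of_forall fun t => by simpa using hmin (Set.mem_univ (x₁ + t • v))
  rw [← hlocal.hasDerivAt_eq_zero hderiv]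
  ring

theorem abs_proximalObjective_sub_sub_le (hf : ∀ x, HasGradientAt f (f' x) x)
    (hK : LipschitzWith K f') (hmin : IsMinOn (proximalObjective f τ x₀) Set.univ x₁)
    (y : E) :
    |proximalObjective f τ x₀ y - proximalObjective f τ x₀ x₁ - ‖y - x₁‖ ^ 2 / (2 * τ)|
      ≤ K / 2 * ‖y - x₁‖ ^ 2 := by
  have hfirst := inner_add_inner_div_eq_zero_of_isMinOn_proximalObjective (hf x₁) hmin (y - x₁)
  have hsplit : ‖y - x₀‖ ^ 2 = ‖y - x₁‖ ^ 2 + 2 * ⟪y - x₁, x₁ - x₀⟫_ℝ + ‖x₁ - x₀‖ ^ 2 := by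
    rw [← norm_add_sq_real, sub_add_sub_cancel]
  have hcancel : proximalObjective f τ x₀ y - proximalObjective f τ x₀ x₁ - ‖y - x₁‖ ^ 2 / (2 * τ)
      = f y - f x₁ - ⟪f' x₁, y - x₁⟫_ℝ := by
    rw [proximalObjective, proximalObjective, hsplit, real_inner_comm]
    linear_combination hfirst
  rw [hcancel]
  exact abs_sub_sub_inner_le_of_lipschitzWith_gradient hf hK x₁ y

theorem norm_sub_le_of_proximalObjective_le (hf : ∀ x, HasGradientAt f (f' x) x)
    (hK : LipschitzWith K f') (hmin : IsMinOn (proximalObjective f τ x₀) Set.univ x₁)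
    (hτ : 0 < τ) (hKτ : K * τ ≤ 1 / 2) {x z : E} {h : ℝ} (hz : ‖z - x₁‖ ≤ h)
    (hxz : proximalObjective f τ x₀ x ≤ proximalObjective f τ x₀ z) :
    ‖x - x₁‖ ≤ (1 + 4 * K * τ) * h := by
  have hlow := (abs_le.1 (abs_proximalObjective_sub_sub_le hf hK hmin x)).1
  have hup := (abs_le.1 (abs_proximalObjective_sub_sub_le hf hK hmin z)).2
  have hcompare : ‖x - x₁‖ ^ 2 / (2 * τ) - K / 2 * ‖x - x₁‖ ^ 2
      ≤ ‖z - x₁‖ ^ 2 / (2 * τ) + K / 2 * ‖z - x₁‖ ^ 2 := by linarith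
  have hsq : (1 - K * τ) * ‖x - x₁‖ ^ 2 ≤ (1 + K * τ) * h ^ 2 :=
    calc (1 - K * τ) * ‖x - x₁‖ ^ 2
        = 2 * τ * (‖x - x₁‖ ^ 2 / (2 * τ) - K / 2 * ‖x - x₁‖ ^ 2) := by field_simp
      _ ≤ 2 * τ * (‖z - x₁‖ ^ 2 / (2 * τ) + K / 2 * ‖z - x₁‖ ^ 2) := by gcongr
      _ = (1 + K * τ) * ‖z - x₁‖ ^ 2 := by field_simp
      _ ≤ (1 + K * τ) * h ^ 2 := by gcongr
  rw [mul_assoc]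
  exact le_one_add_four_mul_of_one_sub_mul_sq_le (by positivity) hKτ ((norm_nonneg _).trans hz) hsq

end

theorem stmt_6_general (d : ℕ) (V : EuclideanSpace ℝ (Fin d) → ℝ)
    (gradV : EuclideanSpace ℝ (Fin d) → EuclideanSpace ℝ (Fin d))
    (hgrad : ∀ x, HasGradientAt V (gradV x) x)
    (K : NNReal) (hK : LipschitzWith K gradV)
    (τ h : ℝ) (hτ : 0 < τ) (hτK : τ ≤ 1 / (2 * (K : ℝ)))
    (x₀ x₁ x₁h : EuclideanSpace ℝ (Fin d))
    (hmin : ∀ y : EuclideanSpace ℝ (Fin d),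
      V x₁ + ‖x₁ - x₀‖ ^ 2 / (2 * τ) ≤ V y + ‖y - x₀‖ ^ 2 / (2 * τ))
    (hminh : ∀ y : EuclideanSpace ℝ (Fin d), (∀ i, ∃ k : ℤ, y i = h * k) →
      V x₁h + ‖x₁h - x₀‖ ^ 2 / (2 * τ) ≤ V y + ‖y - x₀‖ ^ 2 / (2 * τ))
    (hnear : ∃ z : EuclideanSpace ℝ (Fin d), (∀ i, ∃ k : ℤ, z i = h * k) ∧ ‖z - x₁‖ ≤ h) :
    ‖x₁h - x₁‖ ≤ (1 + 4 * (K : ℝ) * τ) * h := by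
  obtain ⟨z, hz_grid, hz_near⟩ := hnear
  have hKτ : (K : ℝ) * τ ≤ 1 / 2 := by
    rcases K.coe_nonneg.eq_or_lt with hK0 | hK0
    · rw [← hK0]; norm_num
    · rw [le_div_iff₀ (by positivity)] at hτK
      linarith
  exact norm_sub_le_of_proximalObjective_le hgrad hK (fun y _ => hmin y) hτ hKτ hz_near
    (hminh z hz_grid)

/-- one-step error between the unconstrained proximal step `x₁` and its
grid-constrained version `x₁ʰ`, for a potential with `K`-Lipschitz gradient and
`τ ≤ 1/(2K)`: `|x₁ʰ − x₁| ≤ (1 + 4Kτ) h`. A grid point within distance `h` of `x₁`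
is assumed to exist. -/
theorem stmt_6 (d : ℕ) (V : EuclideanSpace ℝ (Fin d) → ℝ)
    (gradV : EuclideanSpace ℝ (Fin d) → EuclideanSpace ℝ (Fin d))
    (hgrad : ∀ x, HasGradientAt V (gradV x) x)
    (K : NNReal) (hKpos : 0 < (K : ℝ)) (hK : LipschitzWith K gradV)
    (τ h : ℝ) (hτ : 0 < τ) (hτK : τ ≤ 1 / (2 * (K : ℝ))) (hh : 0 < h)
    (x₀ x₁ x₁h : EuclideanSpace ℝ (Fin d))
    (hmin : ∀ y : EuclideanSpace ℝ (Fin d),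
      V x₁ + ‖x₁ - x₀‖ ^ 2 / (2 * τ) ≤ V y + ‖y - x₀‖ ^ 2 / (2 * τ))
    (hx₁h_grid : ∀ i, ∃ k : ℤ, x₁h i = h * k)
    (hminh : ∀ y : EuclideanSpace ℝ (Fin d), (∀ i, ∃ k : ℤ, y i = h * k) →
      V x₁h + ‖x₁h - x₀‖ ^ 2 / (2 * τ) ≤ V y + ‖y - x₀‖ ^ 2 / (2 * τ))
    (hnear : ∃ z : EuclideanSpace ℝ (Fin d), (∀ i, ∃ k : ℤ, z i = h * k) ∧ ‖z - x₁‖ ≤ h) :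
    ‖x₁h - x₁‖ ≤ (1 + 4 * (K : ℝ) * τ) * h :=
  stmt_6_general d V gradV hgrad K hK τ h hτ hτK x₀ x₁ x₁h hmin hminh hnear
end

section
/- Let μ, ν be probability measures on a finite set S ⊂ ℝ^d, let γ be a coupling of μ and ν, and suppose (x, y) ∈ supp γ with x ≠ y and γ({(x,y)}) = m > 0. Define μ̃ = μ − m δ_x + m δ_y and γ̃ = γ + m δ_{(y,y)} − m δ_{(x,y)}. Then γ̃ is a nonnegative coupling of μ̃ and ν, and the transport cost satisfies ∬ |a−b|² dγ̃ ≤ ∬ |a−b|² dγ. -/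
open scoped Classical

lemma sum_ite_pair {α : Type*} [DecidableEq α] (S : Finset α) (a c y : α) (hy : y ∈ S)
    (m : ℝ) : ∑ b ∈ S, (if (a, b) = (c, y) then m else 0) = if a = c then m else 0 := by
  by_cases h : a = c
  · subst h
    simp [Prod.ext_iff, Finset.sum_ite_eq' S y (fun _ => m), hy]
  · simp [Prod.ext_iff, h]

lemma sum_ite_pair' {α : Type*} [DecidableEq α] (S : Finset α) (b c y : α) (hc : c ∈ S)
    (m : ℝ) : ∑ a ∈ S, (if (a, b) = (c, y) then m else 0) = if b = y then m else 0 := by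
  by_cases h : b = y
  · subst h
    simp [Prod.ext_iff, Finset.sum_ite_eq' S c (fun _ => m), hc]
  · simp [Prod.ext_iff, h]

/-- moving mass `m` from the pair `(x,y)` of an optimal coupling back onto
the diagonal `(y,y)` yields a nonnegative coupling of the modified first marginal with the
same second marginal, with no larger quadratic transport cost. -/
theorem stmt_15 (d : ℕ) (S : Finset (EuclideanSpace ℝ (Fin d)))
    (μ ν : EuclideanSpace ℝ (Fin d) → ℝ)
    (γ : EuclideanSpace ℝ (Fin d) × EuclideanSpace ℝ (Fin d) → ℝ)
    (hγ0 : ∀ p, 0 ≤ γ p)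
    (hμprob : ∑ a ∈ S, μ a = 1) (hνprob : ∑ b ∈ S, ν b = 1)
    (hmargμ : ∀ a ∈ S, ∑ b ∈ S, γ (a, b) = μ a)
    (hmargν : ∀ b ∈ S, ∑ a ∈ S, γ (a, b) = ν b)
    (x y : EuclideanSpace ℝ (Fin d)) (hx : x ∈ S) (hy : y ∈ S) (hxy : x ≠ y)
    (m : ℝ) (hm : γ (x, y) = m) (hmpos : 0 < m)
    (μt : EuclideanSpace ℝ (Fin d) → ℝ)
    (hμt : ∀ a, μt a = μ a - (if a = x then m else 0) + (if a = y then m else 0))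
    (γt : EuclideanSpace ℝ (Fin d) × EuclideanSpace ℝ (Fin d) → ℝ)
    (hγt : ∀ p, γt p = γ p + (if p = (y, y) then m else 0) - (if p = (x, y) then m else 0)) :
    (∀ p, 0 ≤ γt p) ∧
    (∀ a ∈ S, ∑ b ∈ S, γt (a, b) = μt a) ∧
    (∀ b ∈ S, ∑ a ∈ S, γt (a, b) = ν b) ∧
    (∑ a ∈ S, ∑ b ∈ S, dist a b ^ 2 * γt (a, b)
      ≤ ∑ a ∈ S, ∑ b ∈ S, dist a b ^ 2 * γ (a, b)) := by
  have hne : (x, y) ≠ (y, y) := fun h => hxy (congrArg Prod.fst h)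
  refine ⟨?_, ?_, ?_, ?_⟩
  · intro p
    rw [hγt p]
    by_cases h1 : p = (x, y)
    · subst h1
      simp [hne, hm]
    · by_cases h2 : p = (y, y)
      · subst h2
        have := hγ0 (y, y)
        rw [if_pos rfl, if_neg (Ne.symm hne)]
        linarith
      · simp only [if_neg h1, if_neg h2]
        have := hγ0 p
        linarith
  · intro a ha
    simp_rw [hγt]
    rw [Finset.sum_sub_distrib, Finset.sum_add_distrib, hmargμ a ha,
      sum_ite_pair S a y y hy m, sum_ite_pair S a x y hy m, hμt a]
    ring
  · intro b hb
    simp_rw [hγt]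
    rw [Finset.sum_sub_distrib, Finset.sum_add_distrib, hmargν b hb,
      sum_ite_pair' S b y y hy m, sum_ite_pair' S b x y hx m]
    ring
  · simp_rw [hγt, mul_sub, mul_add]
    simp_rw [Finset.sum_sub_distrib, Finset.sum_add_distrib]
    have h1 : ∑ a ∈ S, ∑ b ∈ S, dist a b ^ 2 * (if (a, b) = (y, y) then m else 0) = 0 := by
      apply Finset.sum_eq_zero
      intro a _
      apply Finset.sum_eq_zero
      intro b _
      by_cases h : (a, b) = (y, y)
      · obtain ⟨h1, h2⟩ := Prod.mk.injEq .. ▸ h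
        subst h1; subst h2
        simp
      · simp [h]
    have h2 : 0 ≤ ∑ a ∈ S, ∑ b ∈ S, dist a b ^ 2 * (if (a, b) = (x, y) then m else 0) := by
      apply Finset.sum_nonneg
      intro a _
      apply Finset.sum_nonneg
      intro b _
      positivity
    rw [h1]
    linarith
end

section
/- Let Ω ⊂ ℝ^d be bounded with diameter R, h > 0, and for each pair of neighboring grid points (p,q) ∈ Σ^h (|p − q| = h) let I_h(p,q) be the common face of the cells Q_h(p), Q_h(q) (an axis-parallel (d−1)-cube of side h). Then ∫_Ω ∫_Ω |x − z| · 𝟙{[x,z] ∩ I_h(p,q) ≠ ∅} dx dz ≤ C_R h^{d−1}, where [x,z] is the segment from x to z and C_R depends only on R and d. -/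
/-!
Two distinct points of the grid `hℤ^d` differ by at least `h` in some coordinate `i₀`, so the
common face of their cells lies in the hyperplane `w i₀ = (p i₀ + q i₀) / 2`, inside a box of
side `h` in the remaining coordinates. For a fixed displacement `y`, the points `x` whose segment
`[x, x + y]` meets the face lie in a translate of the parallelepiped spanned by `-y` and the
`h eᵢ` (`i ≠ i₀`), of volume `h^(d-1) |y i₀| ≤ h^(d-1) ‖y‖`. Bounding the weight `|x - z|` by `R`
and substituting `z = x + y` (the shear `(x, y) ↦ (x, x + y)` preserves Lebesgue measure), the
double integral is at most `R ∫_{‖y‖ ≤ R} h^(d-1) ‖y‖ dy ≤ R² |B_R| h^(d-1)`.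
-/

open MeasureTheory
open scoped Classical Pointwise

theorem isClosed_setOf_segment_inter_nonempty {E : Type*} [AddCommGroup E] [Module ℝ E]
    [TopologicalSpace E] [IsTopologicalAddGroup E] [ContinuousSMul ℝ E] {I : Set E}
    (hI : IsClosed I) : IsClosed {p : E × E | (segment ℝ p.1 p.2 ∩ I).Nonempty} := by
  have : {p : E × E | (segment ℝ p.1 p.2 ∩ I).Nonempty} =
      Prod.snd '' {tp : Set.Icc (0 : ℝ) 1 × (E × E) |
        AffineMap.lineMap tp.2.1 tp.2.2 (tp.1 : ℝ) ∈ I} := by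
    ext ⟨x, z⟩
    simp [segment_eq_image_lineMap, Set.Nonempty]
  rw [this]
  exact isClosedMap_snd_of_compactSpace _ (hI.preimage (by fun_prop))

theorem measurableSet_setOf_segment_inter_nonempty_inter {E : Type*} [NormedAddCommGroup E]
    [NormedSpace ℝ E] [MeasurableSpace E] [BorelSpace E] [SecondCountableTopology E]
    {I : Set E} (hI : IsClosed I) (R : ℝ) :
    MeasurableSet ({p : E × E | (segment ℝ p.1 p.2 ∩ I).Nonempty} ∩ {p | dist p.1 p.2 ≤ R}) :=
  ((isClosed_setOf_segment_inter_nonempty hI).inter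
    (isClosed_le continuous_dist continuous_const)).measurableSet

theorem measure_prod_eq_lintegral_measure_shift {G : Type*} [MeasurableSpace G] [AddGroup G]
    [MeasurableAdd₂ G] (μ : Measure G) [SFinite μ] [μ.IsAddLeftInvariant] {S : Set (G × G)}
    (hS : MeasurableSet S) : μ.prod μ S = ∫⁻ y, μ {x | (x, x + y) ∈ S} ∂μ := by
  rw [← (measurePreserving_prod_add μ μ).measure_preimage hS.nullMeasurableSet,
    Measure.prod_apply_symm (hS.preimage (by fun_prop))]
  rfl

theorem enorm_setIntegral_setIntegral_ite_dist_le {X : Type*} [PseudoMetricSpace X]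
    [MeasurableSpace X] (μ : Measure X) [SFinite μ] {Ω : Set X} (hΩ : Bornology.IsBounded Ω)
    {R : ℝ} (hΩR : Metric.diam Ω ≤ R) {S : Set (X × X)}
    (hS : MeasurableSet (S ∩ {p | dist p.1 p.2 ≤ R})) :
    ‖∫ x in Ω, ∫ z in Ω, (if (x, z) ∈ S then dist x z else 0) ∂μ ∂μ‖ₑ ≤
      ENNReal.ofReal R * μ.prod μ (S ∩ {p | dist p.1 p.2 ≤ R}) := by
  set T := S ∩ {p : X × X | dist p.1 p.2 ≤ R}
  have hTm : Measurable (T.indicator fun _ => ENNReal.ofReal R) := measurable_const.indicator hS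
  have hbound : ∀ x ∈ Ω, ∀ z ∈ Ω,
      ‖if (x, z) ∈ S then dist x z else 0‖ₑ ≤ T.indicator (fun _ => ENNReal.ofReal R) (x, z) := by
    intro x hx z hz
    split_ifs with hxz
    · have hdist : dist x z ≤ R := (Metric.dist_le_diam_of_mem hΩ hx hz).trans hΩR
      rw [Set.indicator_of_mem (show (x, z) ∈ T from ⟨hxz, hdist⟩),
        Real.enorm_eq_ofReal dist_nonneg]
      exact ENNReal.ofReal_le_ofReal hdist
    · simp
  calc ‖∫ x in Ω, ∫ z in Ω, (if (x, z) ∈ S then dist x z else 0) ∂μ ∂μ‖ₑ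
      ≤ ∫⁻ x in Ω, ∫⁻ z in Ω, ‖if (x, z) ∈ S then dist x z else 0‖ₑ ∂μ ∂μ :=
        (enorm_integral_le_lintegral_enorm _).trans
          (lintegral_mono fun _ => enorm_integral_le_lintegral_enorm _)
    _ ≤ ∫⁻ x in Ω, ∫⁻ z, T.indicator (fun _ => ENNReal.ofReal R) (x, z) ∂μ ∂μ :=
        setLIntegral_mono hTm.lintegral_prod_right' fun x hx =>
          (setLIntegral_mono (hTm.comp measurable_prodMk_left) (hbound x hx)).trans
            (setLIntegral_le_lintegral _ _)
    _ ≤ ∫⁻ x, ∫⁻ z, T.indicator (fun _ => ENNReal.ofReal R) (x, z) ∂μ ∂μ :=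
        setLIntegral_le_lintegral _ _
    _ = ENNReal.ofReal R * μ.prod μ T := by
        rw [← lintegral_prod _ hTm.aemeasurable, lintegral_indicator_const hS]

theorem Matrix.det_updateCol_smul_one {n R : Type*} [Fintype n] [DecidableEq n] [CommRing R]
    (s : R) (j : n) (b : n → R) :
    (Matrix.updateCol (s • (1 : Matrix n n R)) j b).det = s ^ (Fintype.card n - 1) * b j := by
  rw [← Matrix.cramer_apply, Matrix.cramer_smul, Matrix.cramer_one]
  simp

theorem eq_add_div_two_of_abs_sub_le {w p q r : ℝ} (hp : |w - p| ≤ r) (hq : |w - q| ≤ r)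
    (hpq : 2 * r ≤ |p - q|) : w = (p + q) / 2 := by
  rw [abs_le] at hp hq
  rcases le_abs'.mp hpq with h | h <;> linarith

section EuclideanSpace

variable {ι : Type*}

/-- The closed cell `Q_h(p)`; the face `I_h(p, q)` of the paper is
`gridCell p h ∩ gridCell q h`. -/
def gridCell (p : EuclideanSpace ℝ ι) (h : ℝ) : Set (EuclideanSpace ℝ ι) :=
  {w | ∀ i, |w i - p i| ≤ h / 2}

theorem isClosed_gridCell (p : EuclideanSpace ℝ ι) (h : ℝ) : IsClosed (gridCell p h) := by
  simp only [gridCell, Set.ofPred_forall]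
  exact isClosed_iInter fun i => isClosed_le (by fun_prop) continuous_const

theorem exists_le_abs_sub_of_mem_grid {h : ℝ} (hh : 0 ≤ h)
    {p q : EuclideanSpace ℝ ι} (hp : ∀ i, ∃ k : ℤ, p i = h * k) (hq : ∀ i, ∃ k : ℤ, q i = h * k)
    (hpq : p ≠ q) : ∃ i, h ≤ |p i - q i| := by
  obtain ⟨i, hi⟩ : ∃ i, p i ≠ q i := by
    by_contra! H
    exact hpq (PiLp.ext H)
  obtain ⟨k, hk⟩ := hp i
  obtain ⟨l, hl⟩ := hq i
  have hkl : (1 : ℝ) ≤ |(k : ℝ) - l| := by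
    exact_mod_cast Int.one_le_abs (sub_ne_zero.mpr fun h => hi (by rw [hk, hl, h]))
  refine ⟨i, ?_⟩
  rw [hk, hl, ← mul_sub, abs_mul, abs_of_nonneg hh]
  nlinarith

variable [Fintype ι]

theorem volume_parallelepiped_update_single [DecidableEq ι] (s : ℝ) (i₀ : ι)
    (u : EuclideanSpace ℝ ι) :
    volume (parallelepiped (Function.update (fun i => EuclideanSpace.single i s) i₀ u)) =
      ENNReal.ofReal (|s| ^ (Fintype.card ι - 1) * |u i₀|) := by
  have hM : (EuclideanSpace.basisFun ι ℝ).toBasis.toMatrix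
      (Function.update (fun i => EuclideanSpace.single i s) i₀ u) =
        Matrix.updateCol (s • 1) i₀ u := by
    ext i j
    rw [Module.Basis.toMatrix_apply, OrthonormalBasis.coe_toBasis_repr_apply,
      EuclideanSpace.basisFun_repr]
    rcases eq_or_ne j i₀ with rfl | hj
    · simp
    · simp [hj, Matrix.one_apply]
  rw [← (EuclideanSpace.basisFun ι ℝ).addHaar_eq_volume, Measure.addHaar_parallelepiped,
    Module.Basis.det_apply, hM, Matrix.det_updateCol_smul_one, abs_mul, abs_pow]

theorem setOf_segment_add_inter_nonempty_subset [DecidableEq ι] {F : Set (EuclideanSpace ℝ ι)}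
    {i₀ : ι} {m s : ℝ} {a : ι → ℝ} (hs : 0 < s)
    (hF : ∀ w ∈ F, w i₀ = m ∧ ∀ i, w i ∈ Set.Icc (a i) (a i + s)) (y : EuclideanSpace ℝ ι) :
    {x | (segment ℝ x (x + y) ∩ F).Nonempty} ⊆
      WithLp.toLp 2 (Function.update a i₀ m) +ᵥ
        parallelepiped (Function.update (fun i => EuclideanSpace.single i s) i₀ (-y)) := by
  rintro x ⟨w, hw, hwF⟩
  obtain ⟨t, ht, rfl⟩ : ∃ t ∈ Set.Icc (0 : ℝ) 1, x + t • y = w := by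
    simpa [segment_eq_image'] using hw
  obtain ⟨hwm, hwa⟩ := hF _ hwF
  simp only [WithLp.ofLp_add, WithLp.ofLp_smul, Pi.add_apply, Pi.smul_apply, smul_eq_mul,
    Set.mem_Icc] at hwm hwa
  rw [Set.mem_vadd_set_iff_neg_vadd_mem, mem_parallelepiped_iff]
  refine ⟨Function.update (fun i => (x i + t * y i - a i) / s) i₀ t,
    ⟨fun i => ?_, fun i => ?_⟩, ?_⟩
  · rcases eq_or_ne i i₀ with rfl | hi
    · simpa using ht.1
    · have := (hwa i).1
      simp only [hi, ne_eq, not_false_eq_true, Function.update_of_ne, Pi.zero_apply]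
      exact div_nonneg (by linarith) hs.le
  · rcases eq_or_ne i i₀ with rfl | hi
    · simpa using ht.2
    · have := (hwa i).2
      simp only [hi, ne_eq, not_false_eq_true, Function.update_of_ne, Pi.one_apply, div_le_one hs]
      linarith
  · ext j
    simp only [Function.update_apply, ite_smul, WithLp.ofLp_sum, WithLp.ofLp_neg,
      WithLp.ofLp_smul, Pi.neg_apply, Pi.smul_apply, apply_ite (fun v : EuclideanSpace ℝ ι => v j),
      PiLp.single_apply, smul_eq_mul, Finset.sum_apply]
    rcases eq_or_ne j i₀ with rfl | hj
    · rw [Finset.sum_eq_single j (fun c _ hc => by simp [hc, Ne.symm hc]) (by simp)]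
      simp only [vadd_eq_add, PiLp.add_apply, PiLp.neg_apply, Function.update_self, ↓reduceIte,
        mul_neg]
      linarith
    · rw [Finset.sum_eq_add_of_mem i₀ j (Finset.mem_univ _) (Finset.mem_univ _) hj.symm
        fun c _ hc => by simp [hc.1, Ne.symm hc.2]]
      simp only [vadd_eq_add, PiLp.add_apply, PiLp.neg_apply,
        Function.update_of_ne hj, ↓reduceIte, if_neg hj, div_mul_cancel₀ _ hs.ne']
      ring

theorem volume_setOf_segment_add_inter_nonempty_le {F : Set (EuclideanSpace ℝ ι)} {i₀ : ι}
    {m s : ℝ} {a : ι → ℝ} (hs : 0 < s)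
    (hF : ∀ w ∈ F, w i₀ = m ∧ ∀ i, w i ∈ Set.Icc (a i) (a i + s)) (y : EuclideanSpace ℝ ι) :
    volume {x | (segment ℝ x (x + y) ∩ F).Nonempty} ≤
      ENNReal.ofReal (s ^ (Fintype.card ι - 1) * |y i₀|) := by
  calc volume {x | (segment ℝ x (x + y) ∩ F).Nonempty}
      ≤ volume (WithLp.toLp 2 (Function.update a i₀ m) +ᵥ
          parallelepiped (Function.update (fun i => EuclideanSpace.single i s) i₀ (-y))) :=
        measure_mono (setOf_segment_add_inter_nonempty_subset hs hF y)
    _ = ENNReal.ofReal (s ^ (Fintype.card ι - 1) * |y i₀|) := by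
        rw [measure_vadd, volume_parallelepiped_update_single, abs_of_pos hs]
        simp

theorem volume_setOf_segment_add_inter_gridCell_le {h : ℝ} (hh : 0 < h)
    {p q : EuclideanSpace ℝ ι} (hp : ∀ i, ∃ k : ℤ, p i = h * k) (hq : ∀ i, ∃ k : ℤ, q i = h * k)
    (hpq : p ≠ q) (y : EuclideanSpace ℝ ι) :
    volume {x | (segment ℝ x (x + y) ∩ (gridCell p h ∩ gridCell q h)).Nonempty} ≤
      ENNReal.ofReal (h ^ (Fintype.card ι - 1) * ‖y‖) := by
  obtain ⟨i₀, hi₀⟩ := exists_le_abs_sub_of_mem_grid hh.le hp hq hpq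
  have hface : ∀ w ∈ gridCell p h ∩ gridCell q h, w i₀ = (p i₀ + q i₀) / 2 ∧
      ∀ i, w i ∈ Set.Icc (p i - h / 2) (p i - h / 2 + h) := by
    rintro w ⟨hwp, hwq⟩
    refine ⟨eq_add_div_two_of_abs_sub_le (hwp i₀) (hwq i₀) (by linarith), fun i => ?_⟩
    have := abs_le.mp (hwp i)
    constructor <;> linarith
  calc _ ≤ ENNReal.ofReal (h ^ (Fintype.card ι - 1) * |y i₀|) :=
        volume_setOf_segment_add_inter_nonempty_le hh hface y
    _ ≤ ENNReal.ofReal (h ^ (Fintype.card ι - 1) * ‖y‖) := by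
        gcongr
        exact PiLp.norm_apply_le y i₀

theorem volume_prod_setOf_segment_inter_gridCell_le {h : ℝ} (hh : 0 < h)
    {p q : EuclideanSpace ℝ ι} (hp : ∀ i, ∃ k : ℤ, p i = h * k) (hq : ∀ i, ∃ k : ℤ, q i = h * k)
    (hpq : p ≠ q) (R : ℝ) :
    (volume : Measure (EuclideanSpace ℝ ι)).prod volume
        ({xz : EuclideanSpace ℝ ι × EuclideanSpace ℝ ι |
            (segment ℝ xz.1 xz.2 ∩ (gridCell p h ∩ gridCell q h)).Nonempty} ∩
          {xz | dist xz.1 xz.2 ≤ R}) ≤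
      ENNReal.ofReal (h ^ (Fintype.card ι - 1) * R) *
        volume (Metric.closedBall (0 : EuclideanSpace ℝ ι) R) := by
  rw [measure_prod_eq_lintegral_measure_shift _ (measurableSet_setOf_segment_inter_nonempty_inter
      ((isClosed_gridCell p h).inter (isClosed_gridCell q h)) R),
    ← lintegral_indicator_const measurableSet_closedBall]
  refine lintegral_mono fun y => ?_
  by_cases hy : y ∈ Metric.closedBall 0 R
  · rw [Set.indicator_of_mem hy]
    calc _ ≤ volume {x | (segment ℝ x (x + y) ∩ (gridCell p h ∩ gridCell q h)).Nonempty} :=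
          measure_mono fun x hx => hx.1
      _ ≤ ENNReal.ofReal (h ^ (Fintype.card ι - 1) * ‖y‖) :=
          volume_setOf_segment_add_inter_gridCell_le hh hp hq hpq y
      _ ≤ ENNReal.ofReal (h ^ (Fintype.card ι - 1) * R) := by
          gcongr
          simpa using hy
  · have hyR : ¬ ‖y‖ ≤ R := by simpa using hy
    simp [dist_self_add_right, hyR]

end EuclideanSpace

theorem stmt_17_general (d : ℕ) (R : ℝ) (hR : 0 < R) :
    ∃ C : ℝ, 0 < C ∧
      ∀ (Ω : Set (EuclideanSpace ℝ (Fin d))) (h : ℝ)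
        (p q : EuclideanSpace ℝ (Fin d)),
        0 < h → Bornology.IsBounded Ω → Metric.diam Ω ≤ R →
        (∀ i, ∃ k : ℤ, p i = h * k) → (∀ i, ∃ k : ℤ, q i = h * k) →
        dist p q = h →
        (∫ x in Ω, ∫ z in Ω,
            (if (segment ℝ x z ∩
                  ({w : EuclideanSpace ℝ (Fin d) | ∀ i, |w i - p i| ≤ h / 2} ∩
                   {w : EuclideanSpace ℝ (Fin d) | ∀ i, |w i - q i| ≤ h / 2})).Nonempty
              then dist x z else 0))
          ≤ C * h ^ (d - 1) := by
  have hV : 0 < (volume (Metric.closedBall (0 : EuclideanSpace ℝ (Fin d)) R)).toReal :=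
    ENNReal.toReal_pos (Metric.measure_closedBall_pos _ _ hR).ne' measure_closedBall_lt_top.ne
  refine ⟨R * R * (volume (Metric.closedBall (0 : EuclideanSpace ℝ (Fin d)) R)).toReal,
    by positivity, fun Ω h p q hh hΩ hΩR hp hq hpq => ?_⟩
  have hne : p ≠ q := dist_pos.mp (hpq ▸ hh)
  have key := (enorm_setIntegral_setIntegral_ite_dist_le volume hΩ hΩR
    (measurableSet_setOf_segment_inter_nonempty_inter
      ((isClosed_gridCell p h).inter (isClosed_gridCell q h)) R)).trans
    (mul_le_mul_right (volume_prod_setOf_segment_inter_gridCell_le hh hp hq hne R) _)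
  rw [Fintype.card_fin, ← ENNReal.ofReal_toReal measure_closedBall_lt_top.ne,
    ← ENNReal.ofReal_mul (by positivity), ← ENNReal.ofReal_mul hR.le] at key
  have hbound := (ENNReal.ofReal_le_ofReal_iff (by positivity)).mp
    ((Real.ofReal_le_enorm _).trans key)
  exact hbound.trans_eq (by ring)

/-- the measure of pairs of points of a bounded set `Ω` (of diameter at most
`R`) whose connecting segment crosses the common face of two neighboring grid cells,
weighted by their distance, scales like `h^(d−1)`. -/
theorem stmt_17 (d : ℕ) (hd : 1 ≤ d) (R : ℝ) (hR : 0 < R) :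
    ∃ C : ℝ, 0 < C ∧
      ∀ (Ω : Set (EuclideanSpace ℝ (Fin d))) (h : ℝ)
        (p q : EuclideanSpace ℝ (Fin d)),
        0 < h → Bornology.IsBounded Ω → Metric.diam Ω ≤ R →
        (∀ i, ∃ k : ℤ, p i = h * k) → (∀ i, ∃ k : ℤ, q i = h * k) →
        dist p q = h →
        (∫ x in Ω, ∫ z in Ω,
            (if (segment ℝ x z ∩
                  ({w : EuclideanSpace ℝ (Fin d) | ∀ i, |w i - p i| ≤ h / 2} ∩
                   {w : EuclideanSpace ℝ (Fin d) | ∀ i, |w i - q i| ≤ h / 2})).Nonempty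
              then dist x z else 0))
          ≤ C * h ^ (d - 1) :=
  stmt_17_general d R hR
end
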